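/- Let M be a matroid on a finite set E with rank function r and rank r(M) = r(E). For a finite set T and an integer m, let A(T,m) denote the number of functions T → ℕ whose values sum to m (so A(T,m) = 0 for m < 0, and A(∅,m) = 1 exactly when m = 0). Then for all nonnegative integers i, j, the number of points of ℤ^E in P(M) + iΔ + j∇ equals Σ_{S ⊆ E} Σ_{k ≥ 0} A(S, i − k − (|S| − r(S))) · A(E∖S, j − k − (r(M) − r(S))), where the inner sum over k has only finitely many nonzero terms. -/
import Mathlib


open scoped Pointwise
open Finset

noncomputable section

/-- The standard simplex `Δ = conv{e_i : i ∈ E}` in `ℝ^E`. -/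
def stdSimplexSet (α : Type*) [Fintype α] [DecidableEq α] : Set (α → ℝ) :=
  convexHull ℝ {x : α → ℝ | ∃ i : α, x = Pi.single i (1 : ℝ)}

/-- The number of lattice points (points of `ℤ^E`) in a subset of `ℝ^E`. -/
def latticeCount {α : Type*} (P : Set (α → ℝ)) : ℕ :=
  Set.ncard {q : α → ℤ | (fun i => (q i : ℝ)) ∈ P}

/-- `Qcount P t u` is the number of lattice points of `P + uΔ + t∇`. -/
def Qcount {α : Type*} [Fintype α] [DecidableEq α] (P : Set (α → ℝ)) (t u : ℕ) : ℕ :=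
  latticeCount (P + (u : ℝ) • stdSimplexSet α + (t : ℝ) • (-stdSimplexSet α))

/-- A polymatroid on a finite ground set, given by its rank function. -/
structure PolyMatroid (α : Type*) [Fintype α] [DecidableEq α] where
  rk : Finset α → ℕ
  rk_empty : rk ∅ = 0
  rk_mono : ∀ ⦃S T : Finset α⦄, S ⊆ T → rk S ≤ rk T
  rk_submod : ∀ S T : Finset α, rk (S ∪ T) + rk (S ∩ T) ≤ rk S + rk T

variable {α : Type*} [Fintype α] [DecidableEq α]

/-- A basis of a matroid (an independent spanning set). -/
def PolyMatroid.IsBasis (M : PolyMatroid α) (B : Finset α) : Prop :=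
  M.rk B = B.card ∧ M.rk B = M.rk Finset.univ

/-- The indicator vector of a finite set. -/
def indicatorVec {α : Type*} [DecidableEq α] (B : Finset α) : α → ℝ :=
  fun i => if i ∈ B then 1 else 0

/-- The base polytope of a matroid: the convex hull of indicator vectors of bases. -/
def matroidPolytope (M : PolyMatroid α) : Set (α → ℝ) :=
  convexHull ℝ {x : α → ℝ | ∃ B : Finset α, M.IsBasis B ∧ x = indicatorVec B}

/-- The base polytope of a polymatroid, by its inequality description. -/
def PolyMatroid.polytope (M : PolyMatroid α) : Set (α → ℝ) :=
  {x | (∑ i, x i) = (M.rk Finset.univ : ℝ) ∧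
    ∀ S : Finset α, (∑ i ∈ S, x i) ≤ (M.rk S : ℝ)}

/-- `c : ℕ × ℕ → ℤ` is a `Q'`-datum for the counting function `Q` if it is finitely
supported and interpolates `Q` in the binomial basis. -/
def IsQdatumFun (Q : ℕ → ℕ → ℕ) (c : ℕ × ℕ → ℤ) : Prop :=
  (Function.support c).Finite ∧
    ∀ t u : ℕ, (Q t u : ℤ) = ∑ᶠ p : ℕ × ℕ, c p * (t.choose p.1 : ℤ) * (u.choose p.2 : ℤ)

/-- A `Q'`-datum for the lattice-point counting function of the polytope `P`. -/
def IsQdatum (P : Set (α → ℝ)) (c : ℕ × ℕ → ℤ) : Prop :=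
  IsQdatumFun (Qcount P) c

/-- The polynomial `Q'` associated to a `Q'`-datum, as a function on `ℚ × ℚ`. -/
def Qprime (c : ℕ × ℕ → ℤ) (x y : ℚ) : ℚ :=
  ∑ᶠ p : ℕ × ℕ, (c p : ℚ) * (x - 1) ^ p.1 * (y - 1) ^ p.2

/-- The polynomial `Q'` associated to a `Q'`-datum, as a polynomial in two variables. -/
def QprimePoly (c : ℕ × ℕ → ℤ) : MvPolynomial (Fin 2) ℤ :=
  ∑ᶠ p : ℕ × ℕ,
    MvPolynomial.C (c p) * (MvPolynomial.X 0 - 1) ^ p.1 * (MvPolynomial.X 1 - 1) ^ p.2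

/-- The Tutte polynomial of a matroid, as a function on `ℚ × ℚ`. -/
def TuttePoly (M : PolyMatroid α) (x y : ℚ) : ℚ :=
  ∑ S : Finset α,
    (x - 1) ^ (M.rk Finset.univ - M.rk S) * (y - 1) ^ (S.card - M.rk S)


/-- `numCompositions T m` is the number of functions `T → ℕ` whose values sum to `m`
(encoded as functions on the ambient type supported on `T`); it is `0` for `m < 0` and
`numCompositions ∅ m = 1` exactly when `m = 0`. -/
def numCompositions {α : Type*} (T : Finset α) (m : ℤ) : ℕ :=
  Set.ncard {f : α → ℕ | (∀ i ∉ T, f i = 0) ∧ ((∑ i ∈ T, f i : ℕ) : ℤ) = m}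


/-! ### Auxiliary lemmas -/

section AuxMatroid

variable {M : PolyMatroid α}

lemma CF.rk_insert_le (hmat : ∀ i : α, M.rk {i} ≤ 1) (A : Finset α) (e : α) :
    M.rk (insert e A) ≤ M.rk A + 1 := by
  by_cases he : e ∈ A
  · simp [Finset.insert_eq_self.2 he]
  · have h := M.rk_submod A {e}
    have h1 : A ∪ {e} = insert e A := by
      ext x; simp [or_comm]
    have h2 : A ∩ {e} = ∅ := by
      ext x; simp; rintro hx rfl; exact he hx
    rw [h1, h2, M.rk_empty] at h
    have := hmat e
    omega

lemma CF.rk_le_card (hmat : ∀ i : α, M.rk {i} ≤ 1) (S : Finset α) : M.rk S ≤ S.card := by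
  classical
  induction S using Finset.induction_on with
  | empty => simp [M.rk_empty]
  | @insert a s ha ih =>
    have := CF.rk_insert_le hmat s a
    rw [Finset.card_insert_of_notMem ha]
    omega

lemma CF.indep_subset (hmat : ∀ i : α, M.rk {i} ≤ 1) {A B : Finset α}
    (hB : M.rk B = B.card) (hAB : A ⊆ B) : M.rk A = A.card := by
  have key : ∀ T : Finset α, M.rk (A ∪ T) ≤ M.rk A + T.card := by
    intro T
    induction T using Finset.induction_on with
    | empty => simp
    | @insert a s ha ih =>
      have h1 : A ∪ insert a s = insert a (A ∪ s) := by rw [Finset.union_insert]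
      rw [h1, Finset.card_insert_of_notMem ha]
      have := CF.rk_insert_le hmat (A ∪ s) a
      omega
  have h1 := key (B \ A)
  rw [Finset.union_sdiff_of_subset hAB] at h1
  have h2 : (B \ A).card = B.card - A.card := Finset.card_sdiff_of_subset hAB
  have h3 : A.card ≤ B.card := Finset.card_le_card hAB
  have h4 := CF.rk_le_card hmat A
  omega

lemma CF.rk_closure {A T : Finset α} (h : ∀ e ∈ T, M.rk (insert e A) = M.rk A) :
    M.rk (A ∪ T) = M.rk A := by
  classical
  induction T using Finset.induction_on with
  | empty => simp
  | @insert a s ha ih =>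
    have hs : M.rk (A ∪ s) = M.rk A := ih (fun e heq => h e (Finset.mem_insert_of_mem heq))
    have h1 : (A ∪ s) ∪ (insert a A) = A ∪ insert a s := by ext x; simp; tauto
    have h2 : A ⊆ (A ∪ s) ∩ (insert a A) := by
      intro x hx; simp [hx]
    have hsub := M.rk_submod (A ∪ s) (insert a A)
    have h3 := M.rk_mono h2
    have h4 : M.rk (A ∪ insert a s) ≥ M.rk A := M.rk_mono (Finset.subset_union_left)
    rw [h1, hs, h a (Finset.mem_insert_self a s)] at hsub
    omega

lemma CF.exists_extend (hmat : ∀ i : α, M.rk {i} ≤ 1) {A T : Finset α} (hAT : A ⊆ T)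
    (hA : M.rk A = A.card) :
    ∃ B : Finset α, A ⊆ B ∧ B ⊆ T ∧ M.rk B = B.card ∧ M.rk B = M.rk T := by
  classical
  suffices key : ∀ n (A : Finset α), A ⊆ T → M.rk A = A.card → n = T.card - A.card →
      ∃ B : Finset α, A ⊆ B ∧ B ⊆ T ∧ M.rk B = B.card ∧ M.rk B = M.rk T by
    exact key _ A hAT hA rfl
  intro n
  induction n with
  | zero =>
    intro A hAT hA hn
    have hcard : T.card ≤ A.card := by
      have := Finset.card_le_card hAT; omega
    have hAeq : A = T := Finset.eq_of_subset_of_card_le hAT hcard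
    exact ⟨A, Finset.Subset.refl A, hAT, hA, by rw [hAeq]⟩
  | succ n ih =>
    intro A hAT hA hn
    by_cases hrk : M.rk A = M.rk T
    · exact ⟨A, Finset.Subset.refl A, hAT, hA, hrk⟩
    · have hlt : M.rk A < M.rk T := lt_of_le_of_ne (M.rk_mono hAT) hrk
      have hex : ∃ e ∈ T, M.rk (insert e A) ≠ M.rk A := by
        by_contra hno
        push_neg at hno
        have := CF.rk_closure (M := M) hno
        rw [Finset.union_eq_right.2 hAT] at this
        omega
      obtain ⟨e, heT, hne⟩ := hex
      have heA : e ∉ A := by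
        intro h; exact hne (by rw [Finset.insert_eq_self.2 h])
      have hle := CF.rk_insert_le hmat A e
      have hge : M.rk A ≤ M.rk (insert e A) := M.rk_mono (Finset.subset_insert e A)
      have hA' : M.rk (insert e A) = (insert e A).card := by
        rw [Finset.card_insert_of_notMem heA]; omega
      have hsub' : insert e A ⊆ T := Finset.insert_subset heT hAT
      have hcard' : (insert e A).card = A.card + 1 := Finset.card_insert_of_notMem heA
      obtain ⟨B, hB1, hB2, hB3, hB4⟩ := ih (insert e A) hsub' hA'
        (by rw [hcard']; have := Finset.card_le_card hsub'; omega)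
      exact ⟨B, (Finset.subset_insert e A).trans hB1, hB2, hB3, hB4⟩

lemma CF.exists_basis_inter (hmat : ∀ i : α, M.rk {i} ≤ 1) (S : Finset α) :
    ∃ B : Finset α, M.IsBasis B ∧ M.rk S ≤ (B ∩ S).card := by
  classical
  obtain ⟨I, _, hIS, hI, hIrk⟩ := CF.exists_extend hmat (Finset.empty_subset S)
    (by rw [M.rk_empty, Finset.card_empty])
  obtain ⟨B, hIB, _, hB, hBrk⟩ := CF.exists_extend hmat (Finset.subset_univ I) hI
  refine ⟨B, ⟨hB, hBrk⟩, ?_⟩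
  have hsub : I ⊆ B ∩ S := Finset.subset_inter hIB hIS
  calc M.rk S = I.card := by omega
  _ ≤ (B ∩ S).card := Finset.card_le_card hsub

end AuxMatroid

section AuxGeometry

lemma CF.stdSimplexSet_eq : stdSimplexSet α = stdSimplex ℝ α := by
  rw [stdSimplexSet, ← convexHull_basis_eq_stdSimplex]
  congr 1
  ext x
  constructor
  · rintro ⟨i, rfl⟩
    exact ⟨i, by funext j; simp [Pi.single_apply, eq_comm]⟩
  · rintro ⟨i, rfl⟩
    exact ⟨i, by funext j; simp [Pi.single_apply, eq_comm]⟩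

lemma CF.mem_smul_stdSimplex [Nonempty α] (u : ℕ) (y : α → ℝ) :
    y ∈ (u : ℝ) • stdSimplexSet α ↔ (∀ l, 0 ≤ y l) ∧ ∑ l, y l = (u : ℝ) := by
  rw [CF.stdSimplexSet_eq]
  rcases Nat.eq_zero_or_pos u with hu | hu
  · subst hu
    rw [Nat.cast_zero, Set.zero_smul_set ⟨_, ite_eq_mem_stdSimplex ℝ (Classical.arbitrary α)⟩]
    simp only [Set.mem_zero]
    constructor
    · rintro rfl; simp
    · rintro ⟨h0, hsum⟩
      funext l
      have := (Finset.sum_eq_zero_iff_of_nonneg (fun l _ => h0 l)).1 (by simpa using hsum)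
      simpa using this l (Finset.mem_univ l)
  · have hu' : (0 : ℝ) < u := by exact_mod_cast hu
    constructor
    · rintro ⟨z, hz, rfl⟩
      refine ⟨fun l => mul_nonneg hu'.le (hz.1 l), ?_⟩
      simp only [Pi.smul_apply, smul_eq_mul, ← Finset.mul_sum, hz.2, mul_one]
    · rintro ⟨h0, hsum⟩
      refine ⟨(u : ℝ)⁻¹ • y, ⟨fun l => mul_nonneg (by positivity) (h0 l), ?_⟩, ?_⟩
      · simp only [Pi.smul_apply, smul_eq_mul, ← Finset.mul_sum, hsum]
        field_simp
      · funext l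
        simp [mul_inv_cancel_left₀ hu'.ne']

variable {M : PolyMatroid α}

lemma CF.sum_indicatorVec (B S : Finset α) :
    ∑ l ∈ S, indicatorVec B l = ((S ∩ B).card : ℝ) := by
  simp only [indicatorVec, Finset.sum_ite_mem]
  simp

lemma CF.matroidPolytope_subset (hmat : ∀ i : α, M.rk {i} ≤ 1) :
    matroidPolytope M ⊆
      {x | ∑ l, x l = (M.rk Finset.univ : ℝ) ∧ ∀ S : Finset α, ∑ l ∈ S, x l ≤ (M.rk S : ℝ)} := by
  apply convexHull_min
  · rintro x ⟨B, hB, rfl⟩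
    constructor
    · rw [CF.sum_indicatorVec, Finset.univ_inter, ← hB.2, hB.1]
    · intro S
      rw [CF.sum_indicatorVec]
      have h1 : M.rk (S ∩ B) = (S ∩ B).card :=
        CF.indep_subset hmat hB.1 Finset.inter_subset_right
      have h2 : M.rk (S ∩ B) ≤ M.rk S := M.rk_mono Finset.inter_subset_left
      exact_mod_cast h1 ▸ h2
  · intro x hx y hy a b ha hb hab
    constructor
    · simp only [Pi.add_apply, Pi.smul_apply, smul_eq_mul]
      rw [Finset.sum_add_distrib, ← Finset.mul_sum, ← Finset.mul_sum, hx.1, hy.1]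
      rw [← add_mul, hab, one_mul]
    · intro S
      simp only [Pi.add_apply, Pi.smul_apply, smul_eq_mul]
      rw [Finset.sum_add_distrib, ← Finset.mul_sum, ← Finset.mul_sum]
      calc a * ∑ l ∈ S, x l + b * ∑ l ∈ S, y l
          ≤ a * (M.rk S : ℝ) + b * (M.rk S : ℝ) := by
            gcongr
            exacts [hx.2 S, hy.2 S]
        _ = (M.rk S : ℝ) := by rw [← add_mul, hab, one_mul]

end AuxGeometry

/-- positive support of an integer vector -/
def posSupp (q : α → ℤ) : Finset α := Finset.univ.filter (fun l => 1 ≤ q l)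

/-- The set of integer points satisfying the polymatroid inequalities. -/
def Xset (M : PolyMatroid α) (i j : ℕ) : Set (α → ℤ) :=
  {q : α → ℤ | (∑ l, q l) = (M.rk Finset.univ : ℤ) + i - j ∧
    ∀ S : Finset α, ∑ l ∈ S, q l ≤ (M.rk S : ℤ) + i}

section AuxCounting

variable {M : PolyMatroid α}

lemma CF.forall_ineq (hmat : ∀ i : α, M.rk {i} ≤ 1) (q : α → ℤ) (i : ℕ)
    (hS : ∑ l ∈ posSupp q, q l ≤ (M.rk (posSupp q) : ℤ) + i) (T : Finset α) :
    ∑ l ∈ T, q l ≤ (M.rk T : ℤ) + i := by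
  set S := posSupp q with hSdef
  have hq_pos : ∀ l ∈ S, 1 ≤ q l := fun l hl => (Finset.mem_filter.1 hl).2
  have hq_np : ∀ l ∉ S, q l ≤ 0 := by
    intro l hl
    by_contra h
    exact hl (Finset.mem_filter.2 ⟨Finset.mem_univ l, by omega⟩)
  have h1 : ∑ l ∈ T, q l ≤ ∑ l ∈ T ∩ S, q l := by
    rw [← Finset.sum_inter_add_sum_sdiff T S q]
    have : ∑ l ∈ T \ S, q l ≤ 0 :=
      Finset.sum_nonpos (fun l hl => hq_np l (Finset.mem_sdiff.1 hl).2)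
    omega
  have h2 : ∑ l ∈ S ∩ T, q l + (S \ T).card ≤ ∑ l ∈ S, q l := by
    rw [← Finset.sum_inter_add_sum_sdiff S T q]
    have : ((S \ T).card : ℤ) ≤ ∑ l ∈ S \ T, q l := by
      calc ((S \ T).card : ℤ) = ∑ _l ∈ S \ T, (1 : ℤ) := by simp
      _ ≤ ∑ l ∈ S \ T, q l :=
        Finset.sum_le_sum (fun l hl => hq_pos l (Finset.mem_sdiff.1 hl).1)
    omega
  have h3 : M.rk S ≤ M.rk (S ∩ T) + (S \ T).card := by
    have hsub := M.rk_submod (S ∩ T) (S \ T)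
    have hu : (S ∩ T) ∪ (S \ T) = S := by
      rw [Finset.union_comm, Finset.sdiff_union_inter]
    have hi : (S ∩ T) ∩ (S \ T) = ∅ := by
      ext x; simp only [Finset.mem_inter, Finset.mem_sdiff, Finset.notMem_empty, iff_false]
      tauto
    rw [hu, hi, M.rk_empty] at hsub
    have := CF.rk_le_card hmat (S \ T)
    omega
  have h4 : M.rk (S ∩ T) ≤ M.rk T := M.rk_mono Finset.inter_subset_right
  have hTS : T ∩ S = S ∩ T := Finset.inter_comm T S
  rw [hTS] at h1
  omega

lemma CF.mem_sum_iff [Nonempty α] (hmat : ∀ i : α, M.rk {i} ≤ 1) (i j : ℕ) (q : α → ℤ) :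
    ((fun l => (q l : ℝ)) ∈
      matroidPolytope M + (i : ℝ) • stdSimplexSet α + (j : ℝ) • (-stdSimplexSet α)) ↔
    q ∈ Xset M i j := by
  constructor
  · rintro hmem
    rw [Set.smul_set_neg] at hmem
    obtain ⟨w, hw, b, hb, hwb⟩ := hmem
    obtain ⟨p, hp, a, ha, hpa⟩ := hw
    rw [Set.mem_neg] at hb
    obtain ⟨hp1, hp2⟩ := CF.matroidPolytope_subset hmat hp
    obtain ⟨ha0, hasum⟩ := (CF.mem_smul_stdSimplex i a).1 ha
    obtain ⟨hb0, hbsum⟩ := (CF.mem_smul_stdSimplex j (-b)).1 hb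
    have hq : ∀ l, (q l : ℝ) = p l + a l + b l := by
      intro l
      have h1 := congrFun hwb l
      have h2 := congrFun hpa l
      simp only [Pi.add_apply] at h1 h2
      linarith
    constructor
    · have : ((∑ l, q l : ℤ) : ℝ) = (M.rk Finset.univ : ℝ) + i - j := by
        push_cast
        rw [Finset.sum_congr rfl (fun l _ => hq l)]
        rw [Finset.sum_add_distrib, Finset.sum_add_distrib, hp1, hasum]
        have : ∑ l, b l = -(j : ℝ) := by
          have := hbsum
          simp only [Pi.neg_apply, Finset.sum_neg_distrib] at this
          linarith
        rw [this]; ring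
      exact_mod_cast this
    · intro S
      have : ((∑ l ∈ S, q l : ℤ) : ℝ) ≤ (M.rk S : ℝ) + i := by
        push_cast
        rw [Finset.sum_congr rfl (fun l _ => hq l)]
        rw [Finset.sum_add_distrib, Finset.sum_add_distrib]
        have h1 : ∑ l ∈ S, a l ≤ i := by
          rw [← hasum]
          exact Finset.sum_le_sum_of_subset_of_nonneg (Finset.subset_univ S)
            (fun l _ _ => ha0 l)
        have h2 : ∑ l ∈ S, b l ≤ 0 :=
          Finset.sum_nonpos
            (fun l _ => by have := hb0 l; simp only [Pi.neg_apply] at this; linarith)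
        have h3 := hp2 S
        linarith
      exact_mod_cast this
  · rintro ⟨hq1, hq2⟩
    classical
    set S := posSupp q with hSdef
    obtain ⟨B, hBbasis, hBS⟩ := CF.exists_basis_inter hmat S
    set y : α → ℤ := fun l => q l - (if l ∈ B then 1 else 0) with hy
    set Psum : ℤ := ∑ l, max (y l) 0 with hPsum
    have hindS : ∀ T : Finset α,
        ∑ l ∈ T, (if l ∈ B then (1:ℤ) else 0) = ((T ∩ B).card : ℤ) := by
      intro T
      rw [Finset.sum_ite_mem]
      simp
    have hySm : ∑ l, max (y l) 0 = ∑ l ∈ S, y l := by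
      rw [← Finset.sum_subset (Finset.subset_univ S) (fun x _ hx => ?_)]
      · exact Finset.sum_congr rfl (fun l hl => by
          have h1 : 1 ≤ q l := (Finset.mem_filter.1 hl).2
          have : 0 ≤ y l := by simp only [hy]; split <;> omega
          omega)
      · have hql : ¬ (1 ≤ q x) := fun h => hx (Finset.mem_filter.2 ⟨Finset.mem_univ x, h⟩)
        have : y x ≤ 0 := by simp only [hy]; split <;> omega
        omega
    have hPle : Psum ≤ i := by
      rw [hPsum, hySm]
      have : ∑ l ∈ S, y l = ∑ l ∈ S, q l - ((S ∩ B).card : ℤ) := by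
        simp only [hy, Finset.sum_sub_distrib, hindS S]
      rw [this]
      have h2 := hq2 S
      have h3 : (M.rk S : ℤ) ≤ ((S ∩ B).card : ℤ) := by
        rw [Finset.inter_comm]; exact_mod_cast hBS
      omega
    have hP0 : 0 ≤ Psum := Finset.sum_nonneg (fun l _ => le_max_right _ _)
    set l₀ : α := Classical.arbitrary α with hl₀
    set f : α → ℤ := fun l => max (y l) 0 + (if l = l₀ then ((i : ℤ) - Psum) else 0) with hf
    set g : α → ℤ := fun l => f l - y l with hg
    have hf0 : ∀ l, 0 ≤ f l := by
      intro l; simp only [hf]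
      have := le_max_right (y l) 0
      split <;> omega
    have hg0 : ∀ l, 0 ≤ g l := by
      intro l; simp only [hg, hf]
      have := le_max_left (y l) 0
      have := le_max_right (y l) 0
      split <;> omega
    have hfsum : ∑ l, f l = (i : ℤ) := by
      simp only [hf, Finset.sum_add_distrib, ← hPsum]
      rw [Finset.sum_ite_eq' Finset.univ l₀ (fun _ => (i : ℤ) - Psum)]
      simp
    have hysum : ∑ l, y l = (i : ℤ) - j := by
      simp only [hy, Finset.sum_sub_distrib, hindS Finset.univ]
      rw [Finset.univ_inter, hq1]
      have : (B.card : ℤ) = (M.rk Finset.univ : ℤ) := by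
        exact_mod_cast (hBbasis.1.symm.trans hBbasis.2)
      omega
    have hgsum : ∑ l, g l = (j : ℤ) := by
      simp only [hg, Finset.sum_sub_distrib, hfsum, hysum]
      ring
    have hPmem : indicatorVec B ∈ matroidPolytope M :=
      subset_convexHull ℝ _ ⟨B, hBbasis, rfl⟩
    have hfmem : (fun l => (f l : ℝ)) ∈ (i : ℝ) • stdSimplexSet α := by
      rw [CF.mem_smul_stdSimplex]
      refine ⟨fun l => by exact_mod_cast hf0 l, ?_⟩
      exact_mod_cast hfsum
    have hgmem : (fun l => -(g l : ℝ)) ∈ (j : ℝ) • (-stdSimplexSet α) := by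
      rw [Set.smul_set_neg, Set.mem_neg]
      rw [show (- fun l => -(g l : ℝ)) = (fun l => (g l : ℝ)) from funext (fun l => by simp)]
      rw [CF.mem_smul_stdSimplex]
      refine ⟨fun l => by exact_mod_cast hg0 l, ?_⟩
      exact_mod_cast hgsum
    have hqeq : (fun l => (q l : ℝ)) =
        indicatorVec B + (fun l => (f l : ℝ)) + (fun l => -(g l : ℝ)) := by
      funext l
      have hql : q l = (if l ∈ B then (1:ℤ) else 0) + f l - g l := by
        simp only [hg, hy]; ring
      simp only [Pi.add_apply, indicatorVec]
      rw [hql]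
      push_cast
      split <;> ring
    rw [hqeq]
    exact Set.add_mem_add (Set.add_mem_add hPmem hfmem) hgmem

lemma CF.numCompositions_neg {β : Type*} {T : Finset β} {m : ℤ} (hm : m < 0) :
    numCompositions T m = 0 := by
  have h : {f : β → ℕ | (∀ i ∉ T, f i = 0) ∧ ((∑ i ∈ T, f i : ℕ) : ℤ) = m} = ∅ := by
    ext f
    simp only [Set.mem_setOf_eq, Set.mem_empty_iff_false, iff_false, not_and]
    intro _ h
    have : (0 : ℤ) ≤ ((∑ i ∈ T, f i : ℕ) : ℤ) := Int.ofNat_nonneg _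
    omega
  rw [numCompositions, h, Set.ncard_empty]

lemma CF.Xset_finite (M : PolyMatroid α) (i j : ℕ) : (Xset M i j).Finite := by
  apply Set.Finite.subset
    (Set.Finite.pi (fun _ : α => Set.finite_Icc (-(j:ℤ)) ((M.rk Finset.univ : ℤ) + i)))
  rintro q ⟨hq1, hq2⟩
  intro l _
  simp only [Set.mem_Icc]
  constructor
  · have h1 := hq2 (Finset.univ.erase l)
    have h2 : ∑ x ∈ Finset.univ.erase l, q x + q l = ∑ x, q x := by
      rw [add_comm, Finset.add_sum_erase _ q (Finset.mem_univ l)]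
    have h3 : (M.rk (Finset.univ.erase l) : ℤ) ≤ (M.rk Finset.univ : ℤ) := by
      exact_mod_cast M.rk_mono (Finset.erase_subset _ _)
    omega
  · have h1 := hq2 {l}
    have h2 : (M.rk {l} : ℤ) ≤ (M.rk Finset.univ : ℤ) := by
      exact_mod_cast M.rk_mono (Finset.subset_univ _)
    simp only [Finset.sum_singleton] at h1
    omega

lemma CF.fiber_card (hmat : ∀ i : α, M.rk {i} ≤ 1) (i j : ℕ) (S : Finset α) (k : ℕ) :
    {q : α → ℤ | q ∈ Xset M i j ∧ posSupp q = S ∧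
      (i : ℤ) + M.rk S - ∑ l ∈ S, q l = (k : ℤ)}.ncard =
    numCompositions S ((i : ℤ) - (k : ℤ) - ((S.card : ℤ) - (M.rk S : ℤ))) *
      numCompositions (Sᶜ) ((j : ℤ) - (k : ℤ) - ((M.rk Finset.univ : ℤ) - (M.rk S : ℤ))) := by
  classical
  set m₁ : ℤ := (i : ℤ) - (k : ℤ) - ((S.card : ℤ) - (M.rk S : ℤ)) with hm₁
  set m₂ : ℤ := (j : ℤ) - (k : ℤ) - ((M.rk Finset.univ : ℤ) - (M.rk S : ℤ)) with hm₂
  set C₁ : Set (α → ℕ) := {f : α → ℕ | (∀ l ∉ S, f l = 0) ∧ ((∑ l ∈ S, f l : ℕ) : ℤ) = m₁}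
    with hC₁
  set C₂ : Set (α → ℕ) := {f : α → ℕ | (∀ l ∉ Sᶜ, f l = 0) ∧ ((∑ l ∈ Sᶜ, f l : ℕ) : ℤ) = m₂}
    with hC₂
  set Fib : Set (α → ℤ) := {q : α → ℤ | q ∈ Xset M i j ∧ posSupp q = S ∧
      (i : ℤ) + M.rk S - ∑ l ∈ S, q l = (k : ℤ)} with hFib
  set Φ : (C₁ × C₂ : Type _) → (α → ℤ) :=
    fun fg => fun l => if l ∈ S then 1 + (fg.1.1 l : ℤ) else -(fg.2.1 l : ℤ) with hΦ
  have hposSupp : ∀ fg : C₁ × C₂, posSupp (Φ fg) = S := by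
    intro fg
    ext l
    simp only [posSupp, Finset.mem_filter, Finset.mem_univ, true_and, hΦ]
    constructor
    · intro h
      by_contra hl
      rw [if_neg hl] at h
      have : (0 : ℤ) ≤ (fg.2.1 l : ℤ) := Int.ofNat_nonneg _
      omega
    · intro hl
      rw [if_pos hl]
      have : (0 : ℤ) ≤ (fg.1.1 l : ℤ) := Int.ofNat_nonneg _
      omega
  have hsumS : ∀ fg : C₁ × C₂, ∑ l ∈ S, Φ fg l = (S.card : ℤ) + m₁ := by
    intro fg
    have h : ∀ l ∈ S, Φ fg l = 1 + (fg.1.1 l : ℤ) := fun l hl => by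
      simp only [hΦ, if_pos hl]
    rw [Finset.sum_congr rfl h, Finset.sum_add_distrib]
    have h2 : ∑ l ∈ S, (fg.1.1 l : ℤ) = m₁ := by
      rw [← Nat.cast_sum]
      exact fg.1.2.2
    rw [h2]
    simp
  have hsumSc : ∀ fg : C₁ × C₂, ∑ l ∈ Sᶜ, Φ fg l = -m₂ := by
    intro fg
    have h : ∀ l ∈ Sᶜ, Φ fg l = -(fg.2.1 l : ℤ) := fun l hl => by
      simp only [hΦ, if_neg (Finset.mem_compl.1 hl)]
    rw [Finset.sum_congr rfl h, Finset.sum_neg_distrib]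
    congr 1
    rw [← Nat.cast_sum]
    exact fg.2.2.2
  have hmaps : ∀ fg : C₁ × C₂, Φ fg ∈ Fib := by
    intro fg
    have hps := hposSupp fg
    have hsS := hsumS fg
    have hkey : ∑ l ∈ S, Φ fg l = (M.rk S : ℤ) + i - k := by rw [hsS, hm₁]; ring
    refine ⟨⟨?_, ?_⟩, hps, by rw [hkey]; ring⟩
    · rw [← Finset.sum_add_sum_compl S, hsS, hsumSc fg, hm₁, hm₂]
      ring
    · apply CF.forall_ineq hmat
      rw [hps, hkey]
      have : (0:ℤ) ≤ k := Int.ofNat_nonneg _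
      omega
  have hinj : Function.Injective Φ := by
    rintro ⟨⟨f, hf⟩, ⟨g, hg⟩⟩ ⟨⟨f', hf'⟩, ⟨g', hg'⟩⟩ heq
    simp only [Prod.mk.injEq, Subtype.mk.injEq]
    constructor
    · funext l
      by_cases hl : l ∈ S
      · have := congrFun heq l
        simp only [hΦ, if_pos hl] at this
        exact_mod_cast (by omega : (f l : ℤ) = (f' l : ℤ))
      · rw [hf.1 l hl, hf'.1 l hl]
    · funext l
      by_cases hl : l ∈ S
      · rw [hg.1 l (by simp [hl]), hg'.1 l (by simp [hl])]
      · have := congrFun heq l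
        simp only [hΦ, if_neg hl] at this
        exact_mod_cast (by omega : (g l : ℤ) = (g' l : ℤ))
  have hsurj : ∀ q ∈ Fib, ∃ fg : C₁ × C₂, Φ fg = q := by
    rintro q ⟨⟨hq1, hq2⟩, hps, hk⟩
    have hq_pos : ∀ l ∈ S, 1 ≤ q l := by
      intro l hl
      rw [← hps] at hl
      exact (Finset.mem_filter.1 hl).2
    have hq_np : ∀ l ∉ S, q l ≤ 0 := by
      intro l hl
      rw [← hps] at hl
      by_contra h
      exact hl (Finset.mem_filter.2 ⟨Finset.mem_univ l, by omega⟩)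
    refine ⟨⟨⟨fun l => if l ∈ S then (q l - 1).toNat else 0, ?_, ?_⟩,
            ⟨fun l => if l ∈ S then 0 else (-(q l)).toNat, ?_, ?_⟩⟩, ?_⟩
    · intro l hl; simp only [if_neg hl]
    · push_cast
      rw [Finset.sum_congr rfl (fun l hl => by
        rw [if_pos hl, Int.toNat_of_nonneg (by have := hq_pos l hl; omega)])]
      rw [Finset.sum_sub_distrib]
      simp only [Finset.sum_const, nsmul_eq_mul, mul_one]
      omega
    · intro l hl
      simp only [if_pos (show l ∈ S by simpa using hl)]
    · push_cast
      rw [Finset.sum_congr rfl (fun l hl => by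
        rw [if_neg (Finset.mem_compl.1 hl),
          Int.toNat_of_nonneg (by have := hq_np l (Finset.mem_compl.1 hl); omega)])]
      have hsplit : ∑ l ∈ S, q l + ∑ l ∈ Sᶜ, q l = ∑ l, q l := Finset.sum_add_sum_compl S q
      rw [Finset.sum_neg_distrib]
      omega
    · funext l
      by_cases hl : l ∈ S
      · simp only [hΦ, if_pos hl]
        rw [Int.toNat_of_nonneg (by have := hq_pos l hl; omega)]
        ring
      · simp only [hΦ, if_neg hl]
        rw [Int.toNat_of_nonneg (by have := hq_np l hl; omega)]
        ring
  have hbij : Function.Bijective (fun fg : C₁ × C₂ => (⟨Φ fg, hmaps fg⟩ : Fib)) := by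
    constructor
    · intro a b hab
      exact hinj (congrArg Subtype.val hab)
    · rintro ⟨q, hq⟩
      obtain ⟨fg, hfg⟩ := hsurj q hq
      exact ⟨fg, Subtype.ext hfg⟩
  have h1 : Fib.ncard = Nat.card Fib := (Nat.card_coe_set_eq Fib).symm
  have h2 : Nat.card Fib = Nat.card (C₁ × C₂ : Type _) :=
    (Nat.card_congr (Equiv.ofBijective _ hbij)).symm
  have h3 : Nat.card (C₁ × C₂ : Type _) = Nat.card C₁ * Nat.card C₂ := Nat.card_prod _ _
  rw [h1, h2, h3, Nat.card_coe_set_eq, Nat.card_coe_set_eq]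
  rfl

lemma CF.count_eq (hmat : ∀ i : α, M.rk {i} ≤ 1) (i j : ℕ) :
    (Xset M i j).ncard = ∑ S : Finset α, ∑ k ∈ Finset.range (i + 1),
      numCompositions S ((i : ℤ) - (k : ℤ) - ((S.card : ℤ) - (M.rk S : ℤ))) *
        numCompositions (Sᶜ)
          ((j : ℤ) - (k : ℤ) - ((M.rk Finset.univ : ℤ) - (M.rk S : ℤ))) := by
  classical
  have hXfin := CF.Xset_finite M i j
  set F : Finset (α → ℤ) := hXfin.toFinset with hF
  have hXcard : (Xset M i j).ncard = F.card := by
    rw [hF, Set.ncard_eq_toFinset_card _ hXfin]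
  set key : (α → ℤ) → Finset α × ℕ :=
    fun q => (posSupp q, ((i : ℤ) + M.rk (posSupp q) - ∑ l ∈ posSupp q, q l).toNat) with hkey
  have hmapsto : ∀ q ∈ F, key q ∈ Finset.univ ×ˢ Finset.range (i + 1) := by
    intro q hq
    rw [Set.Finite.mem_toFinset] at hq
    simp only [Finset.mem_product, Finset.mem_univ, true_and, Finset.mem_range, hkey]
    have hq_pos : ∀ l ∈ posSupp q, 1 ≤ q l := fun l hl => (Finset.mem_filter.1 hl).2
    have h2 : ((posSupp q).card : ℤ) ≤ ∑ l ∈ posSupp q, q l := by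
      calc ((posSupp q).card : ℤ) = ∑ _l ∈ posSupp q, (1 : ℤ) := by simp
      _ ≤ _ := Finset.sum_le_sum hq_pos
    have h3 : (M.rk (posSupp q) : ℤ) ≤ ((posSupp q).card : ℤ) := by
      exact_mod_cast CF.rk_le_card hmat (posSupp q)
    omega
  have hstep := Finset.card_eq_sum_card_fiberwise hmapsto
  rw [hXcard, hstep, Finset.sum_product]
  apply Finset.sum_congr rfl
  intro S _
  apply Finset.sum_congr rfl
  intro k hk
  rw [Finset.mem_range] at hk
  rw [← CF.fiber_card hmat i j S k]
  have hset : {q : α → ℤ | q ∈ Xset M i j ∧ posSupp q = S ∧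
      (i : ℤ) + M.rk S - ∑ l ∈ S, q l = (k : ℤ)} =
      ↑(F.filter (fun q => key q = (S, k))) := by
    ext q
    simp only [Finset.coe_filter, Set.mem_setOf_eq, Set.Finite.mem_toFinset, Finset.mem_coe,
      Finset.mem_filter, hkey, Prod.mk.injEq, hF]
    constructor
    · rintro ⟨hqX, hps, heq⟩
      refine ⟨hqX, hps, ?_⟩
      rw [hps]
      omega
    · rintro ⟨hqX, hps, htn⟩
      refine ⟨hqX, hps, ?_⟩
      rw [hps] at htn
      have h0 := hqX.2 S
      omega
  rw [hset, Set.ncard_coe_finset]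

lemma CF.support_subset (hmat : ∀ i : α, M.rk {i} ≤ 1) (i j : ℕ) (S : Finset α) :
    (Function.support fun k : ℕ =>
      numCompositions S ((i : ℤ) - (k : ℤ) - ((S.card : ℤ) - (M.rk S : ℤ))) *
        numCompositions (Sᶜ)
          ((j : ℤ) - (k : ℤ) - ((M.rk Finset.univ : ℤ) - (M.rk S : ℤ)))) ⊆
      ↑(Finset.range (i + 1)) := by
  intro k hk
  simp only [Function.mem_support] at hk
  simp only [Finset.coe_range, Set.mem_Iio]
  by_contra h
  push_neg at h
  apply hk
  have hrk : (M.rk S : ℤ) ≤ (S.card : ℤ) := by exact_mod_cast CF.rk_le_card hmat S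
  have hneg : (i : ℤ) - (k : ℤ) - ((S.card : ℤ) - (M.rk S : ℤ)) < 0 := by omega
  rw [CF.numCompositions_neg hneg, zero_mul]

end AuxCounting

/-- The lattice-point count of `P(M) + iΔ + j∇` equals
`Σ_{S ⊆ E} Σ_{k ≥ 0} A(S, i−k−(|S|−r(S))) · A(E∖S, j−k−(r(M)−r(S)))`, the inner sum
having finitely many nonzero terms. -/
theorem stmt_4 {α : Type*} [Fintype α] [DecidableEq α] [Nonempty α]
    (M : PolyMatroid α) (hmat : ∀ i : α, M.rk {i} ≤ 1) (i j : ℕ) :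
    (∀ S : Finset α,
      (Function.support fun k : ℕ =>
        numCompositions S ((i : ℤ) - (k : ℤ) - ((S.card : ℤ) - (M.rk S : ℤ))) *
          numCompositions (Sᶜ)
            ((j : ℤ) - (k : ℤ) - ((M.rk Finset.univ : ℤ) - (M.rk S : ℤ)))).Finite) ∧
    Qcount (matroidPolytope M) j i =
      ∑ S : Finset α, ∑ᶠ k : ℕ,
        numCompositions S ((i : ℤ) - (k : ℤ) - ((S.card : ℤ) - (M.rk S : ℤ))) *
          numCompositions (Sᶜ)
            ((j : ℤ) - (k : ℤ) - ((M.rk Finset.univ : ℤ) - (M.rk S : ℤ)))  := by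
  constructor
  · intro S
    exact Set.Finite.subset (Finset.range (i + 1)).finite_toSet (CF.support_subset hmat i j S)
  · have hQ : Qcount (matroidPolytope M) j i = (Xset M i j).ncard := by
      rw [Qcount, latticeCount]
      congr 1
      ext q
      simp only [Set.mem_setOf_eq]
      exact CF.mem_sum_iff hmat i j q
    rw [hQ, CF.count_eq hmat i j]
    apply Finset.sum_congr rfl
    intro S _
    exact (finsum_eq_sum_of_support_subset _ (CF.support_subset hmat i j S)).symm


end
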